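/- Let G be a finite simple graph and C an odd cycle in G. If the contraction G/C has a perfect matching, then G has a perfect matching. -/

import Mathlib

/-- A vertex `v` is matched by the edge set `M` if it is an endpoint of some edge of `M`. -/
def Matched {V : Type*} (M : Set (Sym2 V)) (v : V) : Prop := ∃ e ∈ M, v ∈ e

/-- `M` is a matching on `G`: a set of edges of `G`, no two of which share a vertex. -/
def IsMatching {V : Type*} (G : SimpleGraph V) (M : Set (Sym2 V)) : Prop :=
  M ⊆ G.edgeSet ∧ ∀ e ∈ M, ∀ f ∈ M, e ≠ f → ∀ v : V, v ∈ e → v ∉ f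

/-- The contraction `G/C`: the simple graph on `(V ∖ C) ∪ {B}` (with `B = none` the new
vertex) in which two old vertices are adjacent iff they are adjacent in `G`, and `B` is
adjacent to an old vertex `u` iff some vertex of `C` is adjacent to `u` in `G`. -/
def contraction {V : Type*} (G : SimpleGraph V) (C : Set V) :
    SimpleGraph (Option {x : V // x ∉ C}) where
  Adj x y :=
    match x, y with
    | some u, some w => G.Adj u.1 w.1
    | some u, none => ∃ c ∈ C, G.Adj u.1 c
    | none, some w => ∃ c ∈ C, G.Adj w.1 c
    | none, none => False
  symm := by
    constructor
    rintro (_ | u) (_ | w) h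
    · exact h
    · exact h
    · exact h
    · exact G.adj_symm h
  loopless := by
    constructor
    rintro (_ | u) h
    · exact h
    · exact G.ne_of_adj h rfl

/-- The edge set `M/C` induced on `G/C` by an edge set `M` of `G`: the edges of `M` with no
endpoint in `C`, together with the edge `{B, u}` for each edge of `M` with exactly one
endpoint in `C`. -/
def contractEdges {V : Type*} (C : Set V) (M : Set (Sym2 V)) :
    Set (Sym2 (Option {x : V // x ∉ C})) :=
  {e | (∃ (u w : V) (hu : u ∉ C) (hw : w ∉ C),
          s(u, w) ∈ M ∧ e = s(some ⟨u, hu⟩, some ⟨w, hw⟩)) ∨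
       (∃ (u c : V) (hu : u ∉ C), c ∈ C ∧ s(u, c) ∈ M ∧ e = s(none, some ⟨u, hu⟩))}


open SimpleGraph

lemma path_matching {V : Type*} {G : SimpleGraph V} :
    ∀ (n : ℕ) {a b : V} (p : G.Walk a b), p.length = n → Odd n → p.support.Nodup →
    ∃ M : Set (Sym2 V), (∀ e ∈ M, e ∈ p.edges) ∧
      (∀ e ∈ M, ∀ f ∈ M, e ≠ f → ∀ v, v ∈ e → v ∉ f) ∧
      (∀ v ∈ p.support, ∃ e ∈ M, v ∈ e) := by
  intro n
  induction n using Nat.strong_induction_on with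
  | _ n ih =>
  intro a b p hlen hodd hnd
  have hpos : 0 < n := by
    rcases hodd with ⟨k, hk⟩; omega
  have hpnil : ¬ p.Nil := by
    rw [Walk.not_nil_iff_lt_length]; omega
  obtain ⟨x, h1, q, rfl⟩ := Walk.not_nil_iff.1 hpnil
  by_cases hq : q.Nil
  · have hqs : q.support = [x] := by
      cases q with
      | nil => rfl
      | cons h' r => simp at hq
    refine ⟨{s(a, x)}, ?_, ?_, ?_⟩
    · intro e he
      simp only [Set.mem_singleton_iff] at he
      subst he
      simp
    · intro e he f hf hne
      simp only [Set.mem_singleton_iff] at he hf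
      exact absurd (he.trans hf.symm) hne
    · intro w hw
      simp only [Walk.support_cons, hqs, List.mem_cons, List.mem_singleton] at hw
      refine ⟨s(a, x), rfl, ?_⟩
      rcases hw with rfl | rfl | h0
      · simp
      · simp
      · simp at h0
  · obtain ⟨y, h2, r, rfl⟩ := Walk.not_nil_iff.1 hq
    have hlen2 : r.length + 2 = n := by
      simpa [Nat.add_assoc] using hlen
    have hoddr : Odd r.length := by
      rcases hodd with ⟨k, hk⟩
      exact ⟨k - 1, by omega⟩
    have hnd' := hnd
    simp only [Walk.support_cons, List.nodup_cons, List.mem_cons] at hnd'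
    obtain ⟨ha, hx, hrnd⟩ := hnd'
    push_neg at ha
    obtain ⟨hax, har⟩ := ha
    obtain ⟨M, hMe, hMd, hMc⟩ := ih r.length (by omega) r rfl hoddr hrnd
    have key : ∀ f ∈ M, ∀ w, w ∈ f → w ∈ r.support := by
      intro f hf w hw
      induction f with
      | _ t u =>
        rcases Sym2.mem_iff.1 hw with rfl | rfl
        · exact r.fst_mem_support_of_mem_edges (hMe _ hf)
        · exact r.snd_mem_support_of_mem_edges (hMe _ hf)
    refine ⟨insert s(a, x) M, ?_, ?_, ?_⟩
    · intro e he
      rcases Set.mem_insert_iff.1 he with rfl | he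
      · simp
      · simp only [Walk.edges_cons, List.mem_cons]
        exact Or.inr (Or.inr (hMe _ he))
    · intro e he f hf hne w hwe hwf
      rcases Set.mem_insert_iff.1 he with rfl | he <;>
        rcases Set.mem_insert_iff.1 hf with rfl | hf
      · exact hne rfl
      · have hws := key f hf w hwf
        rcases Sym2.mem_iff.1 hwe with rfl | rfl
        · exact har hws
        · exact hx hws
      · have hws := key e he w hwe
        rcases Sym2.mem_iff.1 hwf with rfl | rfl
        · exact har hws
        · exact hx hws
      · exact hMd e he f hf hne w hwe hwf
    · intro w hw
      simp only [Walk.support_cons, List.mem_cons] at hw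
      rcases hw with h0 | h0 | hw
      · exact ⟨s(a, x), Set.mem_insert _ _, by simp [h0]⟩
      · exact ⟨s(a, x), Set.mem_insert _ _, by simp [h0]⟩
      · obtain ⟨e, he, hwe⟩ := hMc w hw
        exact ⟨e, Set.mem_insert_iff.2 (Or.inr he), hwe⟩

lemma tail_mem_closed {V : Type*} {G : SimpleGraph V} {w : V} (p : G.Walk w w)
    (hp : ¬p.Nil) (x : V) : x ∈ p.support ↔ x ∈ p.support.tail := by
  obtain ⟨u, h, q, rfl⟩ := Walk.not_nil_iff.1 hp
  simp only [Walk.support_cons, List.tail_cons, List.mem_cons]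
  constructor
  · rintro (rfl | hx)
    · exact q.end_mem_support
    · exact hx
  · exact Or.inr

lemma lift_inj {V : Type*} {C : Set V} {a b a' b' : V} {ha : a ∉ C} {hb : b ∉ C}
    {ha' : a' ∉ C} {hb' : b' ∉ C}
    (h : s((some ⟨a, ha⟩ : Option {x : V // x ∉ C}), some ⟨b, hb⟩) =
      s(some ⟨a', ha'⟩, some ⟨b', hb'⟩)) : s(a, b) = s(a', b') := by
  rw [Sym2.eq_iff] at h ⊢
  simpa only [Option.some.injEq, Subtype.mk.injEq] using h

theorem expand_perfect {V : Type*} [Fintype V] (G : SimpleGraph V) {v : V}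
    (c : G.Walk v v) (hc : c.IsCycle) (hodd : Odd c.length)
    (h : ∃ M' : Set (Sym2 (Option {x : V // x ∉ {u | u ∈ c.support}})),
        IsMatching (contraction G {u | u ∈ c.support}) M' ∧ ∀ x, Matched M' x) :
    ∃ M : Set (Sym2 V), IsMatching G M ∧ ∀ x : V, Matched M x := by
  classical
  set C : Set V := {u | u ∈ c.support} with hC
  obtain ⟨M', hM', hPerf⟩ := h
  -- the edge of M' at the contracted vertex
  have hB : ∃ (u0 : V) (hu0 : u0 ∉ C),
      s((none : Option {x : V // x ∉ C}), some ⟨u0, hu0⟩) ∈ M' := by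
    obtain ⟨e0, he0, hne0⟩ := hPerf none
    revert he0 hne0
    induction e0 using Sym2.ind with
    | _ p q =>
      intro he0 hne0
      have hadj : (contraction G C).Adj p q := (SimpleGraph.mem_edgeSet _).1 (hM'.1 he0)
      rcases Sym2.mem_iff.1 hne0 with hp | hq
      · subst hp
        cases q with
        | none => exact hadj.elim
        | some u => exact ⟨u.1, u.2, by simpa using he0⟩
      · subst hq
        cases p with
        | none => exact hadj.elim
        | some u =>
          refine ⟨u.1, u.2, ?_⟩
          rw [Sym2.eq_swap] at he0
          simpa using he0
  obtain ⟨u0, hu0, hBu⟩ := hB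
  have hadjB : ∃ c0 ∈ C, G.Adj u0 c0 :=
    (SimpleGraph.mem_edgeSet _).1 (hM'.1 hBu)
  obtain ⟨c0, hc0C, hadj0⟩ := hadjB
  have hc0 : c0 ∈ c.support := hc0C
  -- rotate the cycle to start at c0
  have h3 := hc.three_le_length
  have hcnil : ¬ c.Nil := by rw [SimpleGraph.Walk.not_nil_iff_lt_length]; omega
  set c' : G.Walk c0 c0 := c.rotate c0 hc0 with hc'def
  have hc'cyc : c'.IsCycle := hc.rotate hc0
  have hlen' : c'.length = c.length := by
    have h1 := (SimpleGraph.Walk.rotate_edges c c0 hc0).perm.length_eq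
    rwa [SimpleGraph.Walk.length_edges, SimpleGraph.Walk.length_edges] at h1
  have hc'nil : ¬ c'.Nil := by
    rw [SimpleGraph.Walk.not_nil_iff_lt_length]; omega
  -- transfer support membership between c and c'
  have hmemc' : ∀ x, x ∈ c'.support ↔ x ∈ c.support := by
    intro x
    rw [tail_mem_closed c' hc'nil x, tail_mem_closed c hcnil x]
    exact (SimpleGraph.Walk.support_rotate c c0 hc0).mem_iff
  -- decompose c' = cons h1 (r ++ last edge)
  obtain ⟨x1, h1, q, hq⟩ := SimpleGraph.Walk.not_nil_iff.1 hc'nil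
  have hq_len : q.length + 1 = c.length := by
    rw [← hlen', hq, SimpleGraph.Walk.length_cons]
  have hqnil : ¬ q.Nil := by rw [SimpleGraph.Walk.not_nil_iff_lt_length]; omega
  have hqrnil : ¬ q.reverse.Nil := by
    rw [SimpleGraph.Walk.not_nil_iff_lt_length, SimpleGraph.Walk.length_reverse]
    rw [SimpleGraph.Walk.not_nil_iff_lt_length] at hqnil
    exact hqnil
  obtain ⟨y1, h2, r', hr'⟩ := SimpleGraph.Walk.not_nil_iff.1 hqrnil
  set r : G.Walk x1 y1 := r'.reverse with hrdef
  have hq2 : q = r.append (SimpleGraph.Walk.cons h2.symm SimpleGraph.Walk.nil) := by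
    rw [← SimpleGraph.Walk.reverse_reverse q, hr', SimpleGraph.Walk.reverse_cons]
  have hqsupp : q.support = r.support ++ [c0] := by
    rw [hq2, SimpleGraph.Walk.support_append]
    rfl
  have hr_len : r.length + 2 = c.length := by
    have : q.length = r.length + 1 := by
      rw [hq2, SimpleGraph.Walk.length_append]
      rfl
    omega
  have hodd_r : Odd r.length := by
    rcases hodd with ⟨k, hk⟩
    exact ⟨k - 1, by omega⟩
  have hqnd : q.support.Nodup := by
    have hnd := hc'cyc.support_nodup
    rw [hq] at hnd
    simpa using hnd
  have hrnd : r.support.Nodup := by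
    rw [hqsupp] at hqnd
    exact (List.nodup_append.1 hqnd).1
  have hc0r : c0 ∉ r.support := by
    rw [hqsupp] at hqnd
    intro hx
    exact (List.nodup_append.1 hqnd).2.2 _ hx _ (by simp) rfl
  have hrC : ∀ x ∈ r.support, x ∈ c.support := by
    intro x hx
    have hx1 : x ∈ q.support := by
      rw [hqsupp]; exact List.mem_append_left _ hx
    have hx2 : x ∈ c'.support := by
      rw [hq, SimpleGraph.Walk.support_cons]
      exact List.mem_cons_of_mem _ hx1
    exact (hmemc' x).1 hx2
  have hCcov : ∀ x ∈ c.support, x = c0 ∨ x ∈ r.support := by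
    intro x hx
    have hx2 : x ∈ c'.support := (hmemc' x).2 hx
    rw [hq, SimpleGraph.Walk.support_cons] at hx2
    rcases List.mem_cons.1 hx2 with h0 | h0
    · exact Or.inl h0
    · rw [hqsupp] at h0
      rcases List.mem_append.1 h0 with h0 | h0
      · exact Or.inr h0
      · exact Or.inl (by simpa using h0)
  -- the matching on the path r
  obtain ⟨Mc, hMce, hMcd, hMcc⟩ := path_matching r.length r rfl hodd_r hrnd
  have hMcV : ∀ e ∈ Mc, ∀ x, x ∈ e → x ∈ r.support := by
    intro e he x hx
    induction e with
    | _ t u =>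
      rcases Sym2.mem_iff.1 hx with rfl | rfl
      · exact r.fst_mem_support_of_mem_edges (hMce _ he)
      · exact r.snd_mem_support_of_mem_edges (hMce _ he)
  -- lifted matching
  set Mlift : Set (Sym2 V) :=
    {e | ∃ (a b : V) (ha : a ∉ C) (hb : b ∉ C),
      s(some ⟨a, ha⟩, some ⟨b, hb⟩) ∈ M' ∧ e = s(a, b)} with hMlift
  have hlift_mem : ∀ e ∈ Mlift, ∀ x : V, x ∈ e →
      ∃ (hx : x ∉ C) (e' : Sym2 (Option {y : V // y ∉ C})),
        e' ∈ M' ∧ some ⟨x, hx⟩ ∈ e' ∧ (none : Option {y : V // y ∉ C}) ∉ e' := by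
    rintro e ⟨a, b, ha, hb, hM, rfl⟩ x hx
    rcases Sym2.mem_iff.1 hx with rfl | rfl
    · exact ⟨ha, _, hM, by simp, by simp⟩
    · exact ⟨hb, _, hM, by simp, by simp⟩
  have hu0_unique : ∀ e' ∈ M', (none : Option {y : V // y ∉ C}) ∈ e' →
      e' = s(none, some ⟨u0, hu0⟩) := by
    intro e' he' hmem
    by_contra hne
    exact hM'.2 e' he' _ hBu hne none hmem (by simp)
  refine ⟨Mlift ∪ {s(u0, c0)} ∪ Mc, ⟨?_, ?_⟩, ?_⟩
  · -- edges are in G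
    intro e he
    rcases he with (he | he) | he
    · obtain ⟨a, b, ha, hb, hM, rfl⟩ := he
      exact (SimpleGraph.mem_edgeSet _).2 ((SimpleGraph.mem_edgeSet _).1 (hM'.1 hM))
    · rw [Set.mem_singleton_iff] at he
      subst he
      exact hadj0
    · exact r.edges_subset_edgeSet (hMce _ he)
  · -- disjointness
    intro e he f hf hne x hxe hxf
    rcases he with (he | he) | he <;> rcases hf with (hf | hf) | hf
    · -- both lifted
      obtain ⟨a, b, ha, hb, heM, rfl⟩ := he
      obtain ⟨a', b', ha', hb', hfM, rfl⟩ := hf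
      have hne' : s((some ⟨a, ha⟩ : Option {y : V // y ∉ C}), some ⟨b, hb⟩) ≠
          s(some ⟨a', ha'⟩, some ⟨b', hb'⟩) := fun hcontra => hne (lift_inj hcontra)
      rcases Sym2.mem_iff.1 hxe with rfl | rfl <;>
        rcases Sym2.mem_iff.1 hxf with h0 | h0 <;> subst h0
      · exact hM'.2 _ heM _ hfM hne' _ (Sym2.mem_iff.2 (Or.inl rfl))
          (Sym2.mem_iff.2 (Or.inl rfl))
      · exact hM'.2 _ heM _ hfM hne' _ (Sym2.mem_iff.2 (Or.inl rfl))
          (Sym2.mem_iff.2 (Or.inr rfl))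
      · exact hM'.2 _ heM _ hfM hne' _ (Sym2.mem_iff.2 (Or.inr rfl))
          (Sym2.mem_iff.2 (Or.inl rfl))
      · exact hM'.2 _ heM _ hfM hne' _ (Sym2.mem_iff.2 (Or.inr rfl))
          (Sym2.mem_iff.2 (Or.inr rfl))
    · -- e lifted, f = s(u0, c0)
      obtain ⟨hxC, e', he', hxe', hnone⟩ := hlift_mem e he x hxe
      rw [Set.mem_singleton_iff] at hf
      subst hf
      rcases Sym2.mem_iff.1 hxf with rfl | rfl
      · have hxe2 : some (⟨x, hu0⟩ : {y : V // y ∉ C}) ∈ e' := hxe'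
        have hne2 : e' ≠ s(none, some ⟨x, hu0⟩) := by
          intro hcontra
          rw [hcontra] at hnone
          exact hnone (by simp)
        exact hM'.2 e' he' _ hBu hne2 _ hxe2 (by simp)
      · exact hxC hc0C
    · -- e lifted, f ∈ Mc
      obtain ⟨hxC, _, _, _, _⟩ := hlift_mem e he x hxe
      exact hxC (hrC x (hMcV f hf x hxf))
    · -- e = s(u0, c0), f lifted
      obtain ⟨hxC, e', he', hxe', hnone⟩ := hlift_mem f hf x hxf
      rw [Set.mem_singleton_iff] at he
      subst he
      rcases Sym2.mem_iff.1 hxe with rfl | rfl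
      · have hxe2 : some (⟨x, hu0⟩ : {y : V // y ∉ C}) ∈ e' := hxe'
        have hne2 : e' ≠ s(none, some ⟨x, hu0⟩) := by
          intro hcontra
          rw [hcontra] at hnone
          exact hnone (by simp)
        exact hM'.2 e' he' _ hBu hne2 _ hxe2 (by simp)
      · exact hxC hc0C
    · -- both s(u0, c0)
      rw [Set.mem_singleton_iff] at he hf
      exact hne (he.trans hf.symm)
    · -- e = s(u0, c0), f ∈ Mc
      rw [Set.mem_singleton_iff] at he
      subst he
      have hxr := hMcV f hf x hxf
      rcases Sym2.mem_iff.1 hxe with rfl | rfl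
      · exact hu0 (hrC x hxr)
      · exact hc0r hxr
    · -- e ∈ Mc, f lifted
      obtain ⟨hxC, _, _, _, _⟩ := hlift_mem f hf x hxf
      exact hxC (hrC x (hMcV e he x hxe))
    · -- e ∈ Mc, f = s(u0, c0)
      rw [Set.mem_singleton_iff] at hf
      subst hf
      have hxr := hMcV e he x hxe
      rcases Sym2.mem_iff.1 hxf with rfl | rfl
      · exact hu0 (hrC x hxr)
      · exact hc0r hxr
    · -- both in Mc
      exact hMcd e he f hf hne x hxe hxf
  · -- coverage
    intro x
    by_cases hxC : x ∈ c.support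
    · rcases hCcov x hxC with rfl | hxr
      · exact ⟨s(u0, x), Or.inl (Or.inr rfl), by simp⟩
      · obtain ⟨e, he, hxe⟩ := hMcc x hxr
        exact ⟨e, Or.inr he, hxe⟩
    · obtain ⟨e', he', hxe'⟩ := hPerf (some ⟨x, hxC⟩)
      revert he' hxe'
      induction e' using Sym2.ind with
      | _ p q' =>
        intro he' hxe'
        rcases Sym2.mem_iff.1 hxe' with hp | hp
        · cases q' with
          | none =>
            have heq := hu0_unique _ he' (Sym2.mem_iff.2 (Or.inr rfl))
            rw [← hp] at heq
            simp only [Sym2.eq_iff, Option.some.injEq, Subtype.mk.injEq,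
              reduceCtorEq, false_and, and_false, and_true, true_and,
              false_or, or_false] at heq
            subst heq
            exact ⟨s(x, c0), Or.inl (Or.inr rfl), by simp⟩
          | some b =>
            refine ⟨s(x, b.1), Or.inl (Or.inl ⟨x, b.1, hxC, b.2, ?_, rfl⟩), by simp⟩
            rw [← hp] at he'
            exact he'
        · cases p with
          | none =>
            have heq := hu0_unique _ he' (by simp)
            rw [← hp] at heq
            simp only [Sym2.eq_iff, Option.some.injEq, Subtype.mk.injEq,
              reduceCtorEq, false_and, and_false, and_true, true_and,
              false_or, or_false] at heq
            subst heq
            exact ⟨s(x, c0), Or.inl (Or.inr rfl), by simp⟩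
          | some b =>
            refine ⟨s(b.1, x), Or.inl (Or.inl ⟨b.1, x, b.2, hxC, ?_, rfl⟩), by simp⟩
            rw [← hp] at he'
            exact he'
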